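/- arXiv:1401.3645 — 7 statements merged into one kernel-verified Lean document; each statement's English description precedes it below -/
import Mathlib

section
/- If Γ is a finitely generated residually finite group and φ : Γ → Γ is a surjective group homomorphism, then φ is injective (hence an isomorphism). -/
/-- A group is residually finite if every non-trivial element lies outside some
finite-index normal subgroup (equivalently, survives in some finite quotient). -/
def ResiduallyFinite (G : Type*) [Group G] : Prop :=
  ∀ g : G, g ≠ 1 → ∃ N : Subgroup G, N.Normal ∧ N.FiniteIndex ∧ g ∉ N

lemma finite_homs (Γ F : Type*) [Group Γ] [Group.FG Γ] [Group F] [Finite F] :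
    Finite (Γ →* F) := by
  obtain ⟨S, hS⟩ := Group.fg_iff.mp ‹_›
  obtain ⟨hSc, hSf⟩ := hS
  have : Finite S := hSf
  have : Function.Injective (fun (f : Γ →* F) => (fun s : S => f s)) := by
    intro f g h
    refine MonoidHom.eq_of_eqOn_dense hSc ?_
    intro x hx
    exact congrFun h ⟨x, hx⟩
  exact Finite.of_injective _ this

theorem hopf_property (Γ : Type*) [Group Γ] [Group.FG Γ]
    (hres : ResiduallyFinite Γ) (φ : Γ →* Γ) (hsurj : Function.Surjective φ) :
    Function.Injective φ := by
  rw [← MonoidHom.ker_eq_bot_iff, eq_bot_iff]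
  intro g hg
  by_contra hg1
  obtain ⟨N, hN, hNF, hgN⟩ := hres g (by simpa using hg1)
  have : Finite (Γ ⧸ N) := N.finite_quotient_of_finiteIndex
  let π : Γ →* Γ ⧸ N := QuotientGroup.mk' N
  have T : Function.Injective (fun (ψ : Γ →* Γ ⧸ N) => ψ.comp φ) := by
    intro a b h
    ext x
    obtain ⟨y, rfl⟩ := hsurj x
    exact congrArg (fun f : Γ →* Γ ⧸ N => f y) h
  have := finite_homs Γ (Γ ⧸ N)
  have Tsurj : Function.Surjective (fun (ψ : Γ →* Γ ⧸ N) => ψ.comp φ) :=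
    Finite.surjective_of_injective T
  obtain ⟨ψ, hψ⟩ := Tsurj π
  have : π g = 1 := by
    rw [← hψ]
    simp only [MonoidHom.comp_apply]
    rw [show φ g = 1 from hg]
    exact map_one ψ
  exact hgN ((QuotientGroup.eq_one_iff g).mp this)
end

section
/- Let φ : Γ₁ → Γ₂ be a surjective homomorphism of finitely generated groups. If Γ₁ is residually finite and for every finite group Q the number of homomorphisms Γ₁ → Q equals the number of homomorphisms Γ₂ → Q, then φ is an isomorphism. -/
lemma finite_monoidHom (G Q : Type*) [Group G] [Group.FG G] [Group Q] [Finite Q] :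
    Finite (G →* Q) := by
  obtain ⟨S, hS⟩ := Group.FG.out (G := G)
  have : Function.Injective (fun (f : G →* Q) (s : S) => f s) := by
    intro f g h
    refine MonoidHom.eq_of_eqOn_dense (s := (S : Set G)) (by simpa using hS) ?_
    intro x hx
    exact congrFun h ⟨x, hx⟩
  exact Finite.of_injective _ this

theorem surjective_of_sameHom_isIso (Γ₁ Γ₂ : Type) [Group Γ₁] [Group Γ₂]
    [Group.FG Γ₁] [Group.FG Γ₂] (hres : ResiduallyFinite Γ₁)
    (φ : Γ₁ →* Γ₂) (hsurj : Function.Surjective φ)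
    (hhom : ∀ (Q : Type) [Group Q] [Finite Q],
      Nat.card (Γ₁ →* Q) = Nat.card (Γ₂ →* Q)) :
    Function.Bijective φ := by
  refine ⟨?_, hsurj⟩
  rw [injective_iff_map_eq_one]
  intro g hg
  by_contra hne
  obtain ⟨N, hN, hfin, hgN⟩ := hres g hne
  set Q := Γ₁ ⧸ N
  haveI : Finite Q := @Subgroup.finite_quotient_of_finiteIndex _ _ N hfin
  -- precomposition with φ
  have hinj : Function.Injective (fun f : Γ₂ →* Q => f.comp φ) := by
    intro f₁ f₂ h
    ext y
    obtain ⟨x, rfl⟩ := hsurj y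
    exact congrFun (congrArg DFunLike.coe h) x
  have hf1 : Finite (Γ₁ →* Q) := finite_monoidHom _ _
  have hf2 : Finite (Γ₂ →* Q) := finite_monoidHom _ _
  have hbij : Function.Bijective (fun (f : Γ₂ →* Q) => f.comp φ) :=
    (Nat.bijective_iff_injective_and_card _).mpr ⟨hinj, (hhom Q).symm⟩
  obtain ⟨ψ, hψ⟩ := hbij.surjective (QuotientGroup.mk' N)
  have : (QuotientGroup.mk' N) g = 1 := by
    rw [← hψ]
    simp [hg]
  exact hgN ((QuotientGroup.eq_one_iff g).mp this)
end

section
/- Let Γ be a finitely generated group such that the rank of Γ (minimal number of generators) equals the rank of some finite quotient Q of Γ, and suppose Γ has the same set of finite quotients as a free group F of rank n. Then Γ ≅ F. -/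
/-!
Since `d(Γ) = d(Q) ≤ d(F) ≤ n`, there is a surjection `φ : F → Γ`; let `N` be its kernel.
For a finite group `G`, every homomorphism `F → G` factors through the finite image `P` of `F`
in `G ^ Hom(F, G)`. As `P` is a finite quotient of `F`, it is one of `Γ`, which gives a
surjection `ψ : F → P` killing `N`. Precomposition with `ψ` embeds `Hom(P, G)` into `Hom(F, G)`,
and `Hom(P, G)` is at least as large as `Hom(F, G)`, so every homomorphism `F → G` factors
through `ψ` and kills `N`. Free groups are residually finite (a reduced word of length `L` moves
an endpoint of the path of `L + 1` points that it traces), hence `N = 1` and `φ` is an isomorphism.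
-/

/-- The rank of a group: the least cardinality of a (finite) generating set. -/
noncomputable def grpRank (G : Type*) [Group G] : ℕ :=
  sInf {n | ∃ S : Finset G, S.card = n ∧ Subgroup.closure (S : Set G) = ⊤}

open Function

theorem grpRank_eq_rank (G : Type*) [Group G] [Group.FG G] : grpRank G = Group.rank G :=
  le_antisymm (Nat.sInf_le (Group.rank_spec G))
    (le_csInf ⟨_, Group.rank_spec G⟩ fun _ ⟨_, hS, hcl⟩ => hS ▸ Group.rank_le hcl)

theorem FreeGroup.rank_le_card (α : Type*) [Fintype α] :
    Group.rank (FreeGroup α) ≤ Fintype.card α := by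
  classical
  calc Group.rank (FreeGroup α) ≤ (Finset.univ.image of).card :=
        Group.rank_le (by simp [closure_range_of])
    _ ≤ Fintype.card α := Finset.card_image_le

theorem FreeGroup.exists_surjective_of_rank_le {G : Type*} [Group G] [Group.FG G] {n : ℕ}
    (h : Group.rank G ≤ n) : ∃ φ : FreeGroup (Fin n) →* G, Surjective φ := by
  classical
  obtain ⟨S, hS, hcl⟩ := Group.rank_spec G
  let f : Fin n → G := fun i => if hi : (i : ℕ) < S.card then S.equivFin.symm ⟨i, hi⟩ else 1
  refine ⟨lift f, MonoidHom.range_eq_top.mp ?_⟩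
  rw [range_lift_eq_closure, eq_top_iff, ← hcl]
  exact Subgroup.closure_mono fun s hs => ⟨Fin.castLE (hS ▸ h) (S.equivFin ⟨s, hs⟩), by simp [f]⟩

theorem Equiv.Perm.exists_apply_eq_of_injOn {α β : Type*} [Finite β] {s : Set α} {f g : α → β}
    (hf : Set.InjOn f s) (hg : Set.InjOn g s) : ∃ σ : Perm β, ∀ x ∈ s, σ (f x) = g x := by
  classical
  rw [Set.injOn_iff_injective] at hf hg
  let e := (Equiv.ofInjective _ hf).symm.trans (Equiv.ofInjective _ hg)
  refine ⟨e.extendSubtype, fun x hx => ?_⟩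
  rw [show f x = s.domRestrict f ⟨x, hx⟩ from rfl, e.extendSubtype_apply_of_mem _ ⟨_, rfl⟩]
  simp only [e, Equiv.trans_apply, Equiv.ofInjective_symm_apply]
  rfl

theorem Fin.injOn_cond_succ_castSucc {n : ℕ} {s : Set (Fin n)} {c : Fin n → Bool}
    (hc : ∀ i ∈ s, ∀ j ∈ s, i.succ = j.castSucc → c i = c j) :
    Set.InjOn (fun i => cond (c i) i.succ i.castSucc) s := by
  intro i hi j hj hij
  cases hci : c i <;> cases hcj : c j <;> simp only [hci, hcj, cond_true, cond_false] at hij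
  · exact Fin.castSucc_injective _ hij
  · exact absurd (hc j hj i hi hij.symm) (by simp [hci, hcj])
  · exact absurd (hc i hi j hj hij) (by simp [hci, hcj])
  · exact Fin.succ_injective _ hij

theorem List.prod_smul_last_eq_of_forall_smul_succ {M X : Type*} [Monoid M] [MulAction M X]
    (g : List M) (p : Fin (g.length + 1) → X)
    (h : ∀ i : Fin g.length, g[i] • p i.succ = p i.castSucc) :
    g.prod • p (Fin.last _) = p 0 := by
  induction g with
  | nil => simp
  | cons a g ih =>
    rw [List.prod_cons, mul_smul]
    exact (congrArg (a • ·) (ih (p ∘ Fin.succ) fun i => h i.succ)).trans (h 0)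

theorem FreeGroup.lift_mk_apply_last {α X : Type*} (σ : α → Equiv.Perm X)
    {l : List (α × Bool)} (p : Fin (l.length + 1) → X)
    (h : ∀ i : Fin l.length, cond l[i].2 (σ l[i].1) (σ l[i].1)⁻¹ (p i.succ) = p i.castSucc) :
    lift σ (mk l) (p (Fin.last _)) = p 0 := by
  rw [lift_mk]
  simpa using List.prod_smul_last_eq_of_forall_smul_succ
    (l.map fun x => cond x.2 (σ x.1) (σ x.1)⁻¹) (p ∘ Fin.cast (by simp))
    (fun i => by simpa using h (i.cast (by simp)))

theorem FreeGroup.IsReduced.exists_perm {α : Type*} {l : List (α × Bool)} (hl : IsReduced l) :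
    ∃ σ : α → Equiv.Perm (Fin (l.length + 1)), ∀ i : Fin l.length,
      cond l[i].2 (σ l[i].1) (σ l[i].1)⁻¹ i.succ = i.castSucc := by
  -- The letter `(a, b)` in position `i` asks `σ a` to map `i + 1 ↦ i` if `b`, and `i ↦ i + 1`
  -- otherwise; reducedness makes these requirements a partial injection for each `a`.
  have hc : ∀ (c : Bool → Bool) (a : α), ∀ i ∈ {i : Fin l.length | l[i].1 = a},
      ∀ j ∈ {i : Fin l.length | l[i].1 = a}, i.succ = j.castSucc → c l[i].2 = c l[j].2 := by
    intro c a i hi j hj hij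
    have hj' : (j : ℕ) = i + 1 := by simpa [Fin.ext_iff] using hij.symm
    have hchain := hl.getElem i (by omega)
    simp only [Set.mem_ofPred_eq, Fin.getElem_fin] at hi hj ⊢
    simp only [← hj', hi, hj] at hchain
    rw [hchain trivial]
  choose σ hσ using fun a => Equiv.Perm.exists_apply_eq_of_injOn
    (Fin.injOn_cond_succ_castSucc (hc id a)) (Fin.injOn_cond_succ_castSucc (hc not a))
  refine ⟨σ, fun i => ?_⟩
  have hi := hσ l[i].1 i rfl
  cases hb : l[i].2 <;>
    simp only [hb, id, Bool.not_true, Bool.not_false, cond_true, cond_false] at hi ⊢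
  · rw [Equiv.Perm.inv_eq_iff_eq, hi]
  · exact hi

instance FreeGroup.residuallyFinite (α : Type*) : Group.ResiduallyFinite (FreeGroup α) := by
  classical
  refine Group.residuallyFinite_of_forall_exists_finite_monoidHom fun w hw => ?_
  obtain ⟨σ, hσ⟩ := (isReduced_toWord (x := w)).exists_perm
  refine ⟨_, inferInstance, inferInstance, lift σ, fun h => hw ?_⟩
  have hlast := lift_mk_apply_last σ id hσ
  rw [mk_toWord, h] at hlast
  simpa using hlast

instance FreeGroup.finite_monoidHom (α G : Type*) [Finite α] [Group G] [Finite G] :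
    Finite (FreeGroup α →* G) :=
  .of_equiv _ lift

theorem MonoidHom.exists_comp_eq_of_surjective {F P G : Type*} [MulOneClass F] [MulOneClass P]
    [MulOneClass G] [Finite (F →* G)] {ρ ψ : F →* P}
    (hρ : ∀ f : F →* G, ∃ g : P →* G, g.comp ρ = f) (hψ : Surjective ψ) (f : F →* G) :
    ∃ g : P →* G, g.comp ψ = f := by
  -- `Hom(P, G)` surjects onto `Hom(F, G)` via `ρ` and injects into it via `ψ`.
  have hinj : Injective fun g : P →* G => g.comp ψ := fun _ _ => (cancel_right hψ).mp
  have : Finite (P →* G) := .of_injective _ hinj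
  exact (hinj.bijective_of_nat_card_le (Nat.card_le_card_of_surjective _ hρ)).2 f

theorem MonoidHom.exists_comp_rangeRestrict_pi_eq {F G : Type*} [Group F] [Group G]
    (f : F →* G) :
    ∃ g : (MonoidHom.pi fun f : F →* G => f).range →* G,
      g.comp (MonoidHom.pi fun f : F →* G => f).rangeRestrict = f :=
  ⟨(Pi.evalMonoidHom (fun _ => G) f).comp (Subgroup.subtype _), rfl⟩

theorem MonoidHom.ker_le_ker_of_surjective_range_pi {F Γ G : Type*} [Group F] [Group Γ]
    [Group G] [Finite (F →* G)] {φ : F →* Γ} (hφ : Surjective φ)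
    {χ : Γ →* (MonoidHom.pi fun f : F →* G => f).range} (hχ : Surjective χ) (f : F →* G) :
    φ.ker ≤ f.ker := by
  obtain ⟨g, rfl⟩ := exists_comp_eq_of_surjective (ψ := χ.comp φ)
    exists_comp_rangeRestrict_pi_eq (hχ.comp hφ) f
  exact fun x hx => by simp_all [mem_ker]

theorem free_if_rank_detected_in_finite_quotient (Γ : Type) [Group Γ] [Group.FG Γ]
    (n : ℕ) (Q : Type) [Group Q] [Finite Q] (π : Γ →* Q)
    (hπ : Function.Surjective π) (hrank : grpRank Γ = grpRank Q)
    (hsame : ∀ (Q' : Type) [Group Q'] [Finite Q'],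
      (∃ f : Γ →* Q', Function.Surjective f) ↔
      (∃ f : FreeGroup (Fin n) →* Q', Function.Surjective f)) :
    Nonempty (Γ ≃* FreeGroup (Fin n)) := by
  obtain ⟨g, hg⟩ := (hsame Q).mp ⟨π, hπ⟩
  have hrankΓ : Group.rank Γ ≤ n := calc
    Group.rank Γ = Group.rank Q := by rw [← grpRank_eq_rank, ← grpRank_eq_rank, hrank]
    _ ≤ Group.rank (FreeGroup (Fin n)) := Group.rank_le_of_surjective g hg
    _ ≤ n := by simpa using FreeGroup.rank_le_card (Fin n)
  obtain ⟨φ, hφ⟩ := FreeGroup.exists_surjective_of_rank_le hrankΓ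
  have hker : φ.ker = ⊥ := by
    refine (Subgroup.eq_bot_iff_forall _).mpr fun w hw =>
      Group.eq_one_iff_forall_finiteIndexNormalSubroup w fun H => ?_
    obtain ⟨χ, hχ⟩ := (hsame _).mpr ⟨_, MonoidHom.rangeRestrict_surjective
      (MonoidHom.pi fun f : FreeGroup (Fin n) →* FreeGroup (Fin n) ⧸ H.toSubgroup => f)⟩
    have hwH := MonoidHom.ker_le_ker_of_surjective_range_pi hφ hχ (QuotientGroup.mk' _) hw
    rwa [QuotientGroup.ker_mk', FiniteIndexNormalSubgroup.mem_toSubgroup_iff] at hwH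
  exact ⟨(MulEquiv.ofBijective φ ⟨φ.ker_eq_bot_iff.mp hker, hφ⟩).symm⟩
end

section
/- In a residually finite group G, if N ≤ G is a finite subgroup and the image of N in every finite quotient of G is normal, then N is normal in G. -/
theorem finite_subgroup_normal_of_normal_in_finite_quotients (G : Type*) [Group G]
    (hres : ResiduallyFinite G) (N : Subgroup G) (hN : Finite N)
    (h : ∀ (K : Subgroup G) [K.Normal], K.FiniteIndex →
      (N.map (QuotientGroup.mk' K)).Normal) :
    N.Normal := by
  constructor
  intro n hn x
  by_contra hx
  have := Fintype.ofFinite N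
  -- for each n' : N, the element n'⁻¹ * (x n x⁻¹) is nontrivial
  have key : ∀ n' : N, (n' : G)⁻¹ * (x * n * x⁻¹) ≠ 1 := by
    intro n' h1
    apply hx
    have : x * n * x⁻¹ = (n' : G) := by
      have := congrArg (fun y => (n' : G) * y) h1
      simpa [mul_assoc] using this
    rw [this]; exact n'.2
  choose Ks hnorm hfi hnot using fun n' : N => hres _ (key n')
  set K : Subgroup G := ⨅ n' : N, Ks n' with hK
  have hKnorm : K.Normal := by
    constructor
    intro a ha g
    rw [hK, Subgroup.mem_iInf] at ha ⊢
    exact fun i => (hnorm i).conj_mem a (ha i) g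
  have hKfi : K.FiniteIndex := by
    exact Subgroup.finiteIndex_iInf hfi
  have hmapnorm := h K hKfi
  have hmem : QuotientGroup.mk' K n ∈ N.map (QuotientGroup.mk' K) :=
    ⟨n, hn, rfl⟩
  have hconj := hmapnorm.conj_mem _ hmem (QuotientGroup.mk' K x)
  obtain ⟨m, hmN, hmeq⟩ := hconj
  have : (⟨m, hmN⟩ : N).1⁻¹ * (x * n * x⁻¹) ∈ K := by
    have : (QuotientGroup.mk' K) m = (QuotientGroup.mk' K) (x * n * x⁻¹) := by
      simpa [map_mul, map_inv] using hmeq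
    have := (QuotientGroup.mk'_eq_mk' K).mp this
    obtain ⟨z, hz, hzeq⟩ := this
    have : m⁻¹ * (x * n * x⁻¹) = z := by
      rw [← hzeq]; group
    rw [this]; exact hz
  have hle : K ≤ Ks ⟨m, hmN⟩ := iInf_le _ _
  exact hnot ⟨m, hmN⟩ (hle this)
end

section
/- For any prime p ≥ 3, the orders of elements of PSL(2, p) are exactly the divisors of p, (p−1)/2, and (p+1)/2, and these three numbers are pairwise coprime. -/
/-!
If `A ∈ SL(2, p)` has trace `±2`, its characteristic polynomial is `(X ∓ 1)²`, which divides
`(X ∓ 1)^p = X^p ∓ 1`, so `A^p = ±1`. Otherwise `A` has distinct eigenvalues `λ, λ⁻¹` in the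
algebraic closure; Frobenius permutes them, so `λ^(p-1) = 1` or `λ^(p+1) = 1`. For
`m = (p ∓ 1)/2` this gives `λ^m = λ^(-m) = ±1`, hence the characteristic polynomial divides
`X^m ∓ 1` and `A^m` is central.

Conversely, if `2n ∣ p ∓ 1`, an element `λ ∈ 𝔽_{p²}` of order `2n` has `λ + λ⁻¹ ∈ 𝔽_p`, and the
companion matrix of `X² - (λ + λ⁻¹)X + 1` has order exactly `n` in `PSL(2, p)`, because `λ^k` is
an eigenvalue of its `k`-th power; the unipotent matrix has order `p`.
-/

open Matrix Polynomial

theorem Nat.coprime_half_pred_half_succ {n : ℕ} (hn : Odd n) :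
    n.Coprime ((n - 1) / 2) ∧ n.Coprime ((n + 1) / 2) ∧ ((n - 1) / 2).Coprime ((n + 1) / 2) := by
  obtain ⟨k, rfl⟩ := hn
  have h1 : (2 * k + 1 - 1) / 2 = k := by omega
  have h2 : (2 * k + 1 + 1) / 2 = k + 1 := by omega
  rw [h1, h2]
  refine ⟨?_, ?_, Nat.coprime_self_add_right.mpr (Nat.coprime_one_right k)⟩
  · simp
  · rw [show 2 * k + 1 = k + (k + 1) by ring, Nat.coprime_add_self_left]
    exact Nat.coprime_self_add_right.mpr (Nat.coprime_one_right k)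

theorem ZMod.exists_algebraMap_eq_of_pow_card_eq_self {p : ℕ} [Fact p.Prime] {K : Type*}
    [Field K] [Algebra (ZMod p) K] [CharP K p] {x : K} (hx : x ^ p = x) :
    ∃ a : ZMod p, algebraMap (ZMod p) K a = x := by
  obtain ⟨k, rfl⟩ := (mem_bot_iff_intCast p K).mp ((Subfield.mem_bot_iff_pow_eq_self K p).mpr hx)
  exact ⟨k, map_intCast _ k⟩

namespace Matrix

section CommRing

variable {n R : Type*} [Fintype n] [DecidableEq n] [CommRing R]

theorem pow_eq_scalar_of_charpoly_dvd {M : Matrix n n R} {m : ℕ} {e : R}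
    (h : M.charpoly ∣ X ^ m - C e) : M ^ m = scalar n e := by
  obtain ⟨q, hq⟩ := h
  have := congrArg (aeval M) hq
  rwa [map_mul, aeval_self_charpoly, zero_mul, map_sub, aeval_X_pow, aeval_C, sub_eq_zero] at this

theorem ProjectiveSpecialLinearGroup.mk_pow_eq_one_of_charpoly_dvd (A : SpecialLinearGroup n R)
    {m : ℕ} {e : R} (h : (A : Matrix n n R).charpoly ∣ X ^ m - C e) :
    (QuotientGroup.mk A : ProjectiveSpecialLinearGroup n R) ^ m = 1 := by
  have hAm := pow_eq_scalar_of_charpoly_dvd h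
  rw [← QuotientGroup.mk_pow, QuotientGroup.eq_one_iff, SpecialLinearGroup.mem_center_iff]
  refine ⟨e, ?_, by rw [SpecialLinearGroup.coe_pow, hAm]⟩
  simpa [hAm, scalar_apply, det_diagonal] using (A ^ m).prop

theorem SpecialLinearGroup.pow_mul_card_eq_one_of_mk_pow_eq_one (A : SpecialLinearGroup n R)
    {d : ℕ} (h : (QuotientGroup.mk A : ProjectiveSpecialLinearGroup n R) ^ d = 1) :
    A ^ (d * Fintype.card n) = 1 := by
  rw [← QuotientGroup.mk_pow, QuotientGroup.eq_one_iff, SpecialLinearGroup.mem_center_iff] at h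
  obtain ⟨r, hr, hAd⟩ := h
  apply Subtype.ext
  rw [pow_mul, SpecialLinearGroup.coe_pow, ← hAd, ← map_pow, hr, map_one,
    SpecialLinearGroup.coe_one]

end CommRing

section Field

variable {n F K : Type*} [Fintype n] [DecidableEq n] [Field F] [Field K] [Algebra F K]

theorem pow_eq_one_of_aeval_charpoly_eq_zero {M : Matrix n n F} {l : K}
    (hl : aeval l M.charpoly = 0) {k : ℕ} (hk : M ^ k = 1) : l ^ k = 1 := by
  cases isEmpty_or_nonempty n
  · simp [charpoly_isEmpty] at hl
  have hroot : (M.map (algebraMap F K)).charpoly.IsRoot l := by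
    rwa [charpoly_map, IsRoot, eval_map_algebraMap]
  have := spectrum.pow_mem_pow _ k (mem_spectrum_iff_isRoot_charpoly.mpr hroot)
  rwa [← Matrix.map_pow, hk, Matrix.map_one _ (map_zero _) (map_one _), spectrum.one_eq,
    Set.mem_singleton_iff] at this

end Field

section TwoByTwo

variable {F K : Type*} [Field F] [Field K] [Algebra F K]

theorem ne_zero_of_aeval_charpoly_eq_zero {M : Matrix (Fin 2) (Fin 2) F} (hM : M.det = 1)
    {l : K} (hl : aeval l M.charpoly = 0) : l ≠ 0 := by
  rintro rfl
  simp [charpoly_fin_two, hM] at hl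

theorem algebraMap_trace_eq_add_inv {M : Matrix (Fin 2) (Fin 2) F} (hM : M.det = 1) {l : K}
    (hl : aeval l M.charpoly = 0) : algebraMap F K M.trace = l + l⁻¹ := by
  have hl0 := ne_zero_of_aeval_charpoly_eq_zero hM hl
  simp only [charpoly_fin_two, hM, map_add, map_sub, map_mul, aeval_X_pow, aeval_C, aeval_X,
    map_one] at hl
  field_simp
  linear_combination -hl

theorem charpoly_map_eq_mul {M : Matrix (Fin 2) (Fin 2) F} (hM : M.det = 1) {l : K}
    (hl : aeval l M.charpoly = 0) :
    M.charpoly.map (algebraMap F K) = (X - C l) * (X - C l⁻¹) := by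
  have hl0 := ne_zero_of_aeval_charpoly_eq_zero hM hl
  have htr := algebraMap_trace_eq_add_inv hM hl
  rw [charpoly_fin_two, hM, C_1]
  simp only [Polynomial.map_add, Polynomial.map_sub, Polynomial.map_mul, Polynomial.map_pow,
    map_X, map_C, htr, Polynomial.map_one]
  rw [C_add, ← C_1, ← mul_inv_cancel₀ hl0, C_mul]
  ring

theorem ProjectiveSpecialLinearGroup.mk_pow_eq_one_of_aeval_charpoly
    (A : SpecialLinearGroup (Fin 2) F) {l : K}
    (hl : aeval l (A : Matrix (Fin 2) (Fin 2) F).charpoly = 0)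
    (hne : l ≠ l⁻¹) {m : ℕ} (hm : l ^ (2 * m) = 1) :
    (QuotientGroup.mk A : ProjectiveSpecialLinearGroup (Fin 2) F) ^ m = 1 := by
  obtain ⟨e, he, he'⟩ : ∃ e : F, l ^ m = algebraMap F K e ∧ l⁻¹ ^ m = algebraMap F K e := by
    have hsq : l ^ m * l ^ m = 1 := by rwa [← pow_add, ← two_mul]
    rcases mul_self_eq_one_iff.mp hsq with h | h
    · exact ⟨1, by simp [h], by simp [inv_pow, h]⟩
    · exact ⟨-1, by simp [h], by simp [inv_pow, h]⟩
  apply ProjectiveSpecialLinearGroup.mk_pow_eq_one_of_charpoly_dvd (e := e)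
  rw [← map_dvd_map (algebraMap F K) (algebraMap F K).injective (charpoly_monic _),
    charpoly_map_eq_mul A.prop hl]
  have hroot {x : K} (hx : x ^ m = algebraMap F K e) :
      X - C x ∣ (X ^ m - C e : F[X]).map (algebraMap F K) :=
    dvd_iff_isRoot.mpr (by simp [hx])
  exact (pairwise_coprime_X_sub_C Function.injective_id hne).mul_dvd (hroot he) (hroot he')

end TwoByTwo

section ZMod

variable {p : ℕ} [Fact p.Prime]

theorem charpoly_dvd_X_pow_card_sub_C_of_trace_eq {M : Matrix (Fin 2) (Fin 2) (ZMod p)}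
    (hM : M.det = 1) {e : ZMod p} (he : e ^ 2 = 1) (htr : M.trace = 2 * e) :
    M.charpoly ∣ X ^ p - C e := by
  have hsq : M.charpoly = (X - C e) ^ 2 := by
    rw [charpoly_fin_two, hM, htr, ← he, map_mul, map_pow]
    simp only [map_ofNat]
    ring
  have hfrob : (X - C e) ^ p = X ^ p - C e := by rw [sub_pow_char, ← map_pow, ZMod.pow_card]
  rw [hsq, ← hfrob]
  exact pow_dvd_pow _ (Fact.out : p.Prime).two_le

theorem pow_card_eq_self_or_inv_of_aeval_charpoly {K : Type*} [Field K] [Algebra (ZMod p) K]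
    {M : Matrix (Fin 2) (Fin 2) (ZMod p)} (hM : M.det = 1) {l : K}
    (hl : aeval l M.charpoly = 0) : l ^ p = l ∨ l ^ p = l⁻¹ := by
  have hlp : aeval (l ^ p) M.charpoly = 0 := by
    rw [← expand_aeval, ZMod.expand_card, map_pow, hl, zero_pow (Fact.out : p.Prime).ne_zero]
  rw [← eval_map_algebraMap, charpoly_map_eq_mul hM hl] at hlp
  simpa [sub_eq_zero] using hlp

theorem ProjectiveSpecialLinearGroup.pow_eq_one_or (hp : p ≠ 2)
    (g : ProjectiveSpecialLinearGroup (Fin 2) (ZMod p)) :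
    g ^ p = 1 ∨ g ^ ((p - 1) / 2) = 1 ∨ g ^ ((p + 1) / 2) = 1 := by
  have hodd : p % 2 = 1 := Nat.odd_iff.mp ((Fact.out : p.Prime).odd_of_ne_two hp)
  obtain ⟨A, rfl⟩ := QuotientGroup.mk_surjective g
  by_cases htr : (A : Matrix (Fin 2) (Fin 2) (ZMod p)).trace = 2 * 1 ∨
      (A : Matrix (Fin 2) (Fin 2) (ZMod p)).trace = 2 * -1
  · left
    rcases htr with htr | htr <;>
      exact ProjectiveSpecialLinearGroup.mk_pow_eq_one_of_charpoly_dvd A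
        (charpoly_dvd_X_pow_card_sub_C_of_trace_eq A.prop (by norm_num) htr)
  right
  obtain ⟨l, hl⟩ := IsAlgClosed.exists_aeval_eq_zero (AlgebraicClosure (ZMod p))
    (A : Matrix (Fin 2) (Fin 2) (ZMod p)).charpoly
    (by rw [charpoly_degree_eq_dim]; simp)
  have hl0 := ne_zero_of_aeval_charpoly_eq_zero A.prop hl
  have hne : l ≠ l⁻¹ := by
    intro h
    have htr' := algebraMap_trace_eq_add_inv A.prop hl
    rw [← h, ← two_mul] at htr'
    have hl2 : l * l = 1 := by rw [← mul_inv_cancel₀ hl0, ← h]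
    refine htr ((mul_self_eq_one_iff.mp hl2).imp (fun h1 => ?_) (fun h1 => ?_)) <;>
      exact (algebraMap (ZMod p) (AlgebraicClosure (ZMod p))).injective
        (by simp [htr', h1, map_ofNat])
  rcases pow_card_eq_self_or_inv_of_aeval_charpoly A.prop hl with h | h
  · refine Or.inl (ProjectiveSpecialLinearGroup.mk_pow_eq_one_of_aeval_charpoly A hl hne ?_)
    rw [show 2 * ((p - 1) / 2) = p - 1 by omega, pow_sub₀ _ hl0 (by omega), h, pow_one,
      mul_inv_cancel₀ hl0]
  · refine Or.inr (ProjectiveSpecialLinearGroup.mk_pow_eq_one_of_aeval_charpoly A hl hne ?_)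
    rw [show 2 * ((p + 1) / 2) = p + 1 by omega, pow_succ, h, inv_mul_cancel₀ hl0]

theorem ProjectiveSpecialLinearGroup.exists_orderOf_eq_card :
    ∃ g : ProjectiveSpecialLinearGroup (Fin 2) (ZMod p), orderOf g = p := by
  let U : SpecialLinearGroup (Fin 2) (ZMod p) := ⟨!![1, 1; 0, 1], by simp [det_fin_two_of]⟩
  refine ⟨QuotientGroup.mk U, orderOf_eq_prime ?_ ?_⟩
  · apply ProjectiveSpecialLinearGroup.mk_pow_eq_one_of_charpoly_dvd U
    exact charpoly_dvd_X_pow_card_sub_C_of_trace_eq U.prop (one_pow 2)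
      (by norm_num [U, trace_fin_two_of])
  · rw [Ne, QuotientGroup.eq_one_iff, SpecialLinearGroup.mem_center_iff]
    rintro ⟨r, -, hr⟩
    simpa [U] using congrArg (fun M : Matrix (Fin 2) (Fin 2) (ZMod p) => M 0 1) hr

theorem ProjectiveSpecialLinearGroup.exists_orderOf_eq {n : ℕ} (hn : 1 < n)
    (h : 2 * n ∣ p - 1 ∨ 2 * n ∣ p + 1) :
    ∃ g : ProjectiveSpecialLinearGroup (Fin 2) (ZMod p), orderOf g = n := by
  let K := GaloisField p 2
  obtain ⟨ζ, hζ⟩ : ∃ ζ : Kˣ, orderOf ζ = 2 * n := by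
    obtain ⟨g, hg⟩ := IsCyclic.exists_ofOrder_eq_natCard (α := Kˣ)
    have hcard : Nat.card Kˣ = (p + 1) * (p - 1) := by
      rw [Nat.card_units, GaloisField.card p 2 two_ne_zero, ← Nat.sq_sub_sq, one_pow]
    refine ⟨g ^ (orderOf g / (2 * n)), orderOf_pow_orderOf_div ?_ ?_⟩
    · rw [hg, hcard]
      have := (Fact.out : p.Prime).two_le
      exact Nat.mul_ne_zero (by omega) (by omega)
    · rw [hg, hcard]
      exact h.elim (Dvd.dvd.mul_left · _) (Dvd.dvd.mul_right · _)
  rw [← orderOf_units] at hζ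
  set l : K := (ζ : K)
  have hl0 : l ≠ 0 := ζ.ne_zero
  have hl : l ^ (2 * n) = 1 := hζ ▸ pow_orderOf_eq_one l
  have hlp : l ^ p = l ∨ l ^ p = l⁻¹ := by
    refine h.imp (fun hd => ?_) (fun hd => ?_)
    · rw [← pow_sub_one_mul (Fact.out : p.Prime).ne_zero,
        orderOf_dvd_iff_pow_eq_one.mp (hζ ▸ hd), one_mul]
    · exact eq_inv_of_mul_eq_one_left (pow_succ l p ▸ orderOf_dvd_iff_pow_eq_one.mp (hζ ▸ hd))
  obtain ⟨t, ht⟩ := ZMod.exists_algebraMap_eq_of_pow_card_eq_self (p := p) (x := l + l⁻¹) (by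
    rw [add_pow_char, inv_pow]
    rcases hlp with h | h <;> rw [h]
    rw [inv_inv, add_comm])
  let A : SpecialLinearGroup (Fin 2) (ZMod p) := ⟨!![t, -1; 1, 0], by simp [det_fin_two_of]⟩
  have hroot : aeval l (A : Matrix (Fin 2) (Fin 2) (ZMod p)).charpoly = 0 := by
    simp only [A, charpoly_fin_two, trace_fin_two_of, det_fin_two_of, ht, add_zero, mul_zero,
      mul_one, sub_neg_eq_add, zero_add, map_one, map_add, aeval_sub, map_pow, aeval_X, map_mul,
      aeval_C]
    rw [add_mul, inv_mul_cancel₀ hl0]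
    ring
  have hne : l ≠ l⁻¹ := by
    intro h
    apply pow_ne_one_of_lt_orderOf two_ne_zero (hζ ▸ by omega : 2 < orderOf l)
    rw [sq]
    nth_rewrite 2 [h]
    exact mul_inv_cancel₀ hl0
  refine ⟨QuotientGroup.mk A, Nat.dvd_antisymm (orderOf_dvd_of_pow_eq_one
    (ProjectiveSpecialLinearGroup.mk_pow_eq_one_of_aeval_charpoly A hroot hne hl)) ?_⟩
  have hA := SpecialLinearGroup.pow_mul_card_eq_one_of_mk_pow_eq_one A (pow_orderOf_eq_one _)
  have hdvd := orderOf_dvd_of_pow_eq_one (pow_eq_one_of_aeval_charpoly_eq_zero hroot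
    (congrArg Subtype.val hA))
  rw [hζ, Fintype.card_fin, mul_comm _ 2] at hdvd
  exact Nat.dvd_of_mul_dvd_mul_left two_pos hdvd

end ZMod

end Matrix

theorem orders_in_PSL2p (p : ℕ) [Fact p.Prime] (hp : 3 ≤ p) :
    (Nat.Coprime p ((p - 1) / 2) ∧ Nat.Coprime p ((p + 1) / 2) ∧
      Nat.Coprime ((p - 1) / 2) ((p + 1) / 2)) ∧
    (∀ n : ℕ,
      (∃ g : Matrix.ProjectiveSpecialLinearGroup (Fin 2) (ZMod p), orderOf g = n) ↔
      (n ∣ p ∨ n ∣ (p - 1) / 2 ∨ n ∣ (p + 1) / 2)) := by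
  have hodd : p % 2 = 1 := Nat.odd_iff.mp ((Fact.out : p.Prime).odd_of_ne_two (by omega))
  refine ⟨Nat.coprime_half_pred_half_succ (Nat.odd_iff.mpr hodd), fun n => ⟨?_, ?_⟩⟩
  · rintro ⟨g, rfl⟩
    exact (ProjectiveSpecialLinearGroup.pow_eq_one_or (by omega) g).imp orderOf_dvd_of_pow_eq_one
      (Or.imp orderOf_dvd_of_pow_eq_one orderOf_dvd_of_pow_eq_one)
  rintro (h | h)
  · rcases (Nat.dvd_prime Fact.out).mp h with rfl | rfl
    exacts [⟨1, orderOf_one⟩, ProjectiveSpecialLinearGroup.exists_orderOf_eq_card]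
  by_cases hn : 1 < n
  · exact ProjectiveSpecialLinearGroup.exists_orderOf_eq hn
      (h.imp (Nat.mul_dvd_of_dvd_div (by omega)) (Nat.mul_dvd_of_dvd_div (by omega)))
  obtain rfl : n = 1 := by
    rcases h with h | h <;> have := Nat.pos_of_dvd_of_pos h (by omega) <;> omega
  exact ⟨1, orderOf_one⟩
end

section
/- Let (r,s,t) and (u,v,w) be triples of positive integers. If gcd(r,s,t) = gcd(u,v,w), rst/lcm(r,s,t) = uvw/lcm(u,v,w), and lcm(gcd(r,s), gcd(r,t), gcd(s,t)) = lcm(gcd(u,v), gcd(u,w), gcd(v,w)), then for each prime p the multiset of p-adic valuations {v_p(r), v_p(s), v_p(t)} equals {v_p(u), v_p(v), v_p(w)}; in particular rst = uvw, lcm(r,s,t) = lcm(u,v,w), and rs + rt + st = uv + uw + vw provided additionally that 1/r + 1/s + 1/t = 1/u + 1/v + 1/w. -/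
lemma med_max (p : ℕ) [Fact p.Prime] (x y z : ℚ) (hx : 0 < x) (hy : 0 < y) (hz : 0 < z) :
    max (max (min (padicValRat p x) (padicValRat p y)) (min (padicValRat p x) (padicValRat p z)))
      (min (padicValRat p y) (padicValRat p z)) ⊔ (-(padicValRat p (1/x + 1/y + 1/z)))
    = max (max (padicValRat p x) (padicValRat p y)) (padicValRat p z) := by
  set A := padicValRat p x with hA
  set B := padicValRat p y with hB
  set C := padicValRat p z with hC
  have hx' : (1/x : ℚ) ≠ 0 := by positivity
  have hy' : (1/y : ℚ) ≠ 0 := by positivity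
  have hz' : (1/z : ℚ) ≠ 0 := by positivity
  have hxy : (1/x + 1/y : ℚ) ≠ 0 := by positivity
  have hxyz : (1/x + 1/y + 1/z : ℚ) ≠ 0 := by positivity
  have vx : padicValRat p (1/x) = -A := by rw [one_div, padicValRat.inv]
  have vy : padicValRat p (1/y) = -B := by rw [one_div, padicValRat.inv]
  have vz : padicValRat p (1/z) = -C := by rw [one_div, padicValRat.inv]
  have h1 : min (min (-A) (-B)) (-C) ≤ padicValRat p (1/x + 1/y + 1/z) := by
    have := padicValRat.min_le_padicValRat_add (p := p) hxyz
    have := padicValRat.min_le_padicValRat_add (p := p) hxy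
    rw [vx, vy] at *
    rw [vz] at *
    omega
  rcases (by omega : (A < C ∧ B < C) ∨ (A < B ∧ C < B) ∨ (B < A ∧ C < A) ∨
      max (max (min A B) (min A C)) (min B C) = max (max A B) C) with h | h | h | h
  · have h2 : padicValRat p (1/x + 1/y + 1/z) = -C := by
      rw [add_comm (1/x + 1/y) (1/z),
        padicValRat.add_eq_of_lt (by rwa [add_comm]) hz' hxy, vz]
      rw [vz]
      refine lt_of_lt_of_le ?_ (padicValRat.min_le_padicValRat_add hxy)
      rw [vx, vy]; omega
    rw [h2]; omega
  · have hxy2 : padicValRat p (1/x + 1/y) = -B := by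
      rw [add_comm, padicValRat.add_eq_of_lt (by rwa [add_comm]) hy' hx', vy]
      rw [vx, vy]; omega
    have h2 : padicValRat p (1/x + 1/y + 1/z) = -B := by
      rw [padicValRat.add_eq_of_lt hxyz hxy hz' (by rw [hxy2, vz]; omega), hxy2]
    rw [h2]; omega
  · have hxy2 : padicValRat p (1/x + 1/y) = -A := by
      rw [padicValRat.add_eq_of_lt hxy hx' hy' (by rw [vx, vy]; omega), vx]
    have h2 : padicValRat p (1/x + 1/y + 1/z) = -A := by
      rw [padicValRat.add_eq_of_lt hxyz hxy hz' (by rw [hxy2, vz]; omega), hxy2]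
    rw [h2]; omega
  · omega

lemma sort3 (x y z : ℕ) : ({x, y, z} : Multiset ℕ)
    = {min (min x y) z, max (max (min x y) (min x z)) (min y z), max (max x y) z} := by
  have s12 : ∀ a b c : ℕ, ({a, b, c} : Multiset ℕ) = {b, a, c} := fun a b c =>
    Multiset.cons_swap a b {c}
  have s23 : ∀ a b c : ℕ, ({a, b, c} : Multiset ℕ) = {a, c, b} := fun a b c =>
    congrArg (a ::ₘ ·) (Multiset.cons_swap b c 0)
  rcases le_total x y with h1 | h1 <;> rcases le_total y z with h2 | h2 <;>
    rcases le_total x z with h3 | h3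
  · rw [show min (min x y) z = x by omega,
      show max (max (min x y) (min x z)) (min y z) = y by omega,
      show max (max x y) z = z by omega]
  · rw [show min (min x y) z = x by omega,
      show max (max (min x y) (min x z)) (min y z) = y by omega,
      show max (max x y) z = z by omega]
  · rw [show min (min x y) z = x by omega,
      show max (max (min x y) (min x z)) (min y z) = z by omega,
      show max (max x y) z = y by omega, s23]
  · rw [show min (min x y) z = z by omega,
      show max (max (min x y) (min x z)) (min y z) = x by omega,
      show max (max x y) z = y by omega, s23, s12]
  · rw [show min (min x y) z = y by omega,
      show max (max (min x y) (min x z)) (min y z) = x by omega,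
      show max (max x y) z = z by omega, s12]
  · rw [show min (min x y) z = y by omega,
      show max (max (min x y) (min x z)) (min y z) = z by omega,
      show max (max x y) z = x by omega, s12, s23]
  · rw [show min (min x y) z = x by omega,
      show max (max (min x y) (min x z)) (min y z) = y by omega,
      show max (max x y) z = z by omega]
  · rw [show min (min x y) z = z by omega,
      show max (max (min x y) (min x z)) (min y z) = y by omega,
      show max (max x y) z = x by omega, s12, s23, s12]

lemma fac_gcd3 (p r s t : ℕ) (hr : r ≠ 0) (hs : s ≠ 0) (ht : t ≠ 0) :
    (Nat.gcd (Nat.gcd r s) t).factorization p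
      = min (min (r.factorization p) (s.factorization p)) (t.factorization p) := by
  rw [Nat.factorization_gcd (Nat.gcd_ne_zero_left hr) ht,
    Nat.factorization_gcd hr hs, Finsupp.inf_apply, Finsupp.inf_apply]

lemma fac_lcm3 (p r s t : ℕ) (hr : r ≠ 0) (hs : s ≠ 0) (ht : t ≠ 0) :
    (Nat.lcm (Nat.lcm r s) t).factorization p
      = max (max (r.factorization p) (s.factorization p)) (t.factorization p) := by
  rw [Nat.factorization_lcm (Nat.lcm_ne_zero hr hs) ht,
    Nat.factorization_lcm hr hs, Finsupp.sup_apply, Finsupp.sup_apply]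

lemma fac_medlcm (p r s t : ℕ) (hr : r ≠ 0) (hs : s ≠ 0) (ht : t ≠ 0) :
    (Nat.lcm (Nat.lcm (Nat.gcd r s) (Nat.gcd r t)) (Nat.gcd s t)).factorization p
      = max (max (min (r.factorization p) (s.factorization p))
          (min (r.factorization p) (t.factorization p)))
        (min (s.factorization p) (t.factorization p)) := by
  have h1 : Nat.gcd r s ≠ 0 := Nat.gcd_ne_zero_left hr
  have h2 : Nat.gcd r t ≠ 0 := Nat.gcd_ne_zero_left hr
  have h3 : Nat.gcd s t ≠ 0 := Nat.gcd_ne_zero_left hs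
  rw [Nat.factorization_lcm (Nat.lcm_ne_zero h1 h2) h3,
    Nat.factorization_lcm h1 h2, Finsupp.sup_apply, Finsupp.sup_apply,
    Nat.factorization_gcd hr hs, Nat.factorization_gcd hr ht,
    Nat.factorization_gcd hs ht, Finsupp.inf_apply, Finsupp.inf_apply, Finsupp.inf_apply]

lemma fac_val (p r : ℕ) (hp : p.Prime) :
    padicValRat p (r : ℚ) = (r.factorization p : ℤ) := by
  rw [padicValRat.of_nat, Nat.factorization_def _ hp]

lemma fac_mul3 (p r s t : ℕ) (hr : r ≠ 0) (hs : s ≠ 0) (ht : t ≠ 0) :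
    (r * s * t).factorization p
      = r.factorization p + s.factorization p + t.factorization p := by
  rw [Nat.factorization_mul (Nat.mul_ne_zero hr hs) ht,
    Nat.factorization_mul hr hs, Finsupp.add_apply, Finsupp.add_apply]

set_option maxHeartbeats 1600000 in
theorem moreconditions (r s t u v w : ℕ)
    (hr : 0 < r) (hs : 0 < s) (ht : 0 < t)
    (hu : 0 < u) (hv : 0 < v) (hw : 0 < w)
    (hgcd : Nat.gcd (Nat.gcd r s) t = Nat.gcd (Nat.gcd u v) w)
    (hquot : r * s * t / Nat.lcm (Nat.lcm r s) t
           = u * v * w / Nat.lcm (Nat.lcm u v) w)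
    (hlcmgcd : Nat.lcm (Nat.lcm (Nat.gcd r s) (Nat.gcd r t)) (Nat.gcd s t)
             = Nat.lcm (Nat.lcm (Nat.gcd u v) (Nat.gcd u w)) (Nat.gcd v w))
    (hrecip : (1 : ℚ) / r + 1 / s + 1 / t = 1 / u + 1 / v + 1 / w) :
    (∀ p : ℕ, p.Prime →
      ({r.factorization p, s.factorization p, t.factorization p} : Multiset ℕ)
        = {u.factorization p, v.factorization p, w.factorization p}) ∧
    r * s * t = u * v * w ∧
    Nat.lcm (Nat.lcm r s) t = Nat.lcm (Nat.lcm u v) w ∧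
    r * s + r * t + s * t = u * v + u * w + v * w := by
  -- per-prime min, med, max equalities
  have key : ∀ p : ℕ, p.Prime →
      (min (min (r.factorization p) (s.factorization p)) (t.factorization p)
        = min (min (u.factorization p) (v.factorization p)) (w.factorization p)) ∧
      (max (max (min (r.factorization p) (s.factorization p))
          (min (r.factorization p) (t.factorization p)))
        (min (s.factorization p) (t.factorization p))
        = max (max (min (u.factorization p) (v.factorization p))
          (min (u.factorization p) (w.factorization p)))
        (min (v.factorization p) (w.factorization p))) ∧
      (max (max (r.factorization p) (s.factorization p)) (t.factorization p)
        = max (max (u.factorization p) (v.factorization p)) (w.factorization p)) := by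
    intro p hp
    haveI : Fact p.Prime := ⟨hp⟩
    have hmin : (Nat.gcd (Nat.gcd r s) t).factorization p
        = (Nat.gcd (Nat.gcd u v) w).factorization p := by rw [hgcd]
    rw [fac_gcd3 p r s t hr.ne' hs.ne' ht.ne', fac_gcd3 p u v w hu.ne' hv.ne' hw.ne'] at hmin
    have hmed : (Nat.lcm (Nat.lcm (Nat.gcd r s) (Nat.gcd r t)) (Nat.gcd s t)).factorization p
        = (Nat.lcm (Nat.lcm (Nat.gcd u v) (Nat.gcd u w)) (Nat.gcd v w)).factorization p := by
      rw [hlcmgcd]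
    rw [fac_medlcm p r s t hr.ne' hs.ne' ht.ne',
      fac_medlcm p u v w hu.ne' hv.ne' hw.ne'] at hmed
    refine ⟨hmin, hmed, ?_⟩
    have e1 := med_max p (r : ℚ) (s : ℚ) (t : ℚ)
      (by exact_mod_cast hr) (by exact_mod_cast hs) (by exact_mod_cast ht)
    have e2 := med_max p (u : ℚ) (v : ℚ) (w : ℚ)
      (by exact_mod_cast hu) (by exact_mod_cast hv) (by exact_mod_cast hw)
    rw [fac_val p r hp, fac_val p s hp, fac_val p t hp] at e1
    rw [fac_val p u hp, fac_val p v hp, fac_val p w hp] at e2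
    rw [hrecip] at e1
    have : (max (max (r.factorization p) (s.factorization p)) (t.factorization p) : ℤ)
        = (max (max (u.factorization p) (v.factorization p)) (w.factorization p) : ℤ) := by
      push_cast at e1 e2 hmed ⊢
      omega
    exact_mod_cast this
  have hmult : ∀ p : ℕ, p.Prime →
      ({r.factorization p, s.factorization p, t.factorization p} : Multiset ℕ)
        = {u.factorization p, v.factorization p, w.factorization p} := by
    intro p hp
    obtain ⟨h1, h2, h3⟩ := key p hp
    rw [sort3 (r.factorization p) (s.factorization p) (t.factorization p),
      sort3 (u.factorization p) (v.factorization p) (w.factorization p), h1, h2, h3]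
  have hprod : r * s * t = u * v * w := by
    have h0 : r * s * t ≠ 0 := by positivity
    have h0' : u * v * w ≠ 0 := by positivity
    refine Nat.factorization_inj h0 h0' ?_
    ext p
    by_cases hp : p.Prime
    · obtain ⟨h1, h2, h3⟩ := key p hp
      rw [fac_mul3 p r s t hr.ne' hs.ne' ht.ne', fac_mul3 p u v w hu.ne' hv.ne' hw.ne']
      omega
    · rw [Nat.factorization_eq_zero_of_not_prime _ hp,
        Nat.factorization_eq_zero_of_not_prime _ hp]
  have hlcm : Nat.lcm (Nat.lcm r s) t = Nat.lcm (Nat.lcm u v) w := by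
    have h0 : Nat.lcm (Nat.lcm r s) t ≠ 0 := Nat.lcm_ne_zero (Nat.lcm_ne_zero hr.ne' hs.ne') ht.ne'
    have h0' : Nat.lcm (Nat.lcm u v) w ≠ 0 := Nat.lcm_ne_zero (Nat.lcm_ne_zero hu.ne' hv.ne') hw.ne'
    refine Nat.factorization_inj h0 h0' ?_
    ext p
    by_cases hp : p.Prime
    · rw [fac_lcm3 p r s t hr.ne' hs.ne' ht.ne', fac_lcm3 p u v w hu.ne' hv.ne' hw.ne']
      exact (key p hp).2.2
    · rw [Nat.factorization_eq_zero_of_not_prime _ hp,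
        Nat.factorization_eq_zero_of_not_prime _ hp]
  refine ⟨hmult, hprod, hlcm, ?_⟩
  have hr' : (r : ℚ) ≠ 0 := by positivity
  have hs' : (s : ℚ) ≠ 0 := by positivity
  have ht' : (t : ℚ) ≠ 0 := by positivity
  have hu' : (u : ℚ) ≠ 0 := by positivity
  have hv' : (v : ℚ) ≠ 0 := by positivity
  have hw' : (w : ℚ) ≠ 0 := by positivity
  have e1 : ((r * s + r * t + s * t : ℕ) : ℚ)
      = ((1 : ℚ) / r + 1 / s + 1 / t) * ((r * s * t : ℕ) : ℚ) := by
    push_cast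
    field_simp
    ring
  have e2 : ((u * v + u * w + v * w : ℕ) : ℚ)
      = ((1 : ℚ) / u + 1 / v + 1 / w) * ((u * v * w : ℕ) : ℚ) := by
    push_cast
    field_simp
    ring
  have : ((r * s + r * t + s * t : ℕ) : ℚ) = ((u * v + u * w + v * w : ℕ) : ℚ) := by
    rw [e1, e2, hrecip, hprod]
  exact_mod_cast this
end

section
/- The abelianisation of the (r,s,t) triangle group ⟨x,y,z | xyz = x^r = y^s = z^t = 1⟩ is isomorphic to C_d × C_e, where d = gcd(r,s,t) and e = lcm(gcd(r,s), gcd(r,t), gcd(s,t)). -/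
/-!
Writing `z = (x y)⁻¹`, the abelianisation is `ℤ²` modulo `r • x`, `s • y` and `t • (x + y)`.
Let `g = gcd r t` and `n = gcd s (lcm r t)`. A Bézout combination of `r • x` and `t • (x + y)`
shows that `x + b • y` is killed by `g` for a suitable integer `b`, and `y` is killed by `s` and
by `lcm r t`, hence by `n`; conversely `x ↦ (1, -b)`, `y ↦ (0, 1)` respects the relations, so the
abelianisation is `ℤ/g × ℤ/n`. Finally `ℤ/g × ℤ/n ≅ ℤ/gcd(g, n) × ℤ/lcm(g, n)`, where
`gcd(g, n) = gcd(r, s, t)` and, since `gcd` distributes over `lcm`,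
`lcm(g, n) = lcm(gcd(r, s), gcd(r, t), gcd(s, t))`.
-/

/-- The defining relators of the (r,s,t) triangle group
`⟨x, y, z ∣ xyz = xʳ = yˢ = zᵗ = 1⟩`. -/
def triangleRels (r s t : ℕ) : Set (FreeGroup (Fin 3)) :=
  {FreeGroup.of 0 * FreeGroup.of 1 * FreeGroup.of 2,
   FreeGroup.of 0 ^ r, FreeGroup.of 1 ^ s, FreeGroup.of 2 ^ t}

theorem Nat.gcd_lcm_distrib_left (a b c : ℕ) :
    a.gcd (b.lcm c) = (a.gcd b).lcm (a.gcd c) := by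
  rcases eq_or_ne a 0 with rfl | ha
  · simp
  rcases eq_or_ne b 0 with rfl | hb
  · simp [Nat.lcm_eq_left (Nat.gcd_dvd_left a c)]
  rcases eq_or_ne c 0 with rfl | hc
  · simp [Nat.lcm_eq_right (Nat.gcd_dvd_left a b)]
  apply Nat.factorization_inj (Nat.gcd_ne_zero_left ha)
    (Nat.lcm_ne_zero (Nat.gcd_ne_zero_left ha) (Nat.gcd_ne_zero_left ha))
  ext p
  simp only [Nat.factorization_gcd ha (Nat.lcm_ne_zero hb hc), Nat.factorization_lcm hb hc,
    Nat.factorization_lcm (Nat.gcd_ne_zero_left ha) (Nat.gcd_ne_zero_left ha),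
    Nat.factorization_gcd ha hb, Nat.factorization_gcd ha hc, Finsupp.inf_apply,
    Finsupp.sup_apply]
  omega

namespace ZMod

theorem addMonoidHom_ext {n : ℕ} {B : Type*} [AddMonoid B] {f f' : ZMod n →+ B}
    (h : f 1 = f' 1) : f = f' := by
  have hℤ : f.comp (Int.castAddHom _) = f'.comp (Int.castAddHom _) :=
    AddMonoidHom.ext_int (by simpa using h)
  ext a
  obtain ⟨i, rfl⟩ := intCast_surjective a
  exact DFunLike.congr_fun hℤ i

variable {k l : ℕ}

theorem prod_addMonoidHom_ext {B : Type*} [AddCommMonoid B] {f f' : ZMod k × ZMod l →+ B} (h₁ : f (1, 0) = f' (1, 0))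
    (h₂ : f (0, 1) = f' (0, 1)) : f = f' := by
  rw [← AddMonoidHom.coprod_unique f, ← AddMonoidHom.coprod_unique f']
  congr 1 <;> exact addMonoidHom_ext ‹_›

theorem zsmul_prod_intCast_eq_zero_iff (a i j : ℤ) :
    a • ((i : ZMod k), (j : ZMod l)) = 0 ↔ (k : ℤ) ∣ a * i ∧ (l : ℤ) ∣ a * j := by
  simp only [Prod.smul_mk, Prod.mk_eq_zero, zsmul_eq_mul, ← Int.cast_mul,
    intCast_zmod_eq_zero_iff_dvd]

variable {B : Type*} [AddCommGroup B]

def prodLift (u v : B) (hu : (k : ℤ) • u = 0) (hv : (l : ℤ) • v = 0) :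
    ZMod k × ZMod l →+ B :=
  (lift k ⟨zmultiplesHom B u, by simpa using hu⟩).coprod
    (lift l ⟨zmultiplesHom B v, by simpa using hv⟩)

section prodLift

variable {u v : B} {hu : (k : ℤ) • u = 0} {hv : (l : ℤ) • v = 0}

@[simp]
theorem prodLift_intCast (i j : ℤ) : prodLift u v hu hv (i, j) = i • u + j • v := by
  simp [prodLift]

@[simp]
theorem prodLift_one_zero : prodLift u v hu hv (1, 0) = u := by
  simpa using prodLift_intCast (hu := hu) (hv := hv) 1 0

@[simp]
theorem prodLift_zero_one : prodLift u v hu hv (0, 1) = v := by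
  simpa using prodLift_intCast (hu := hu) (hv := hv) 0 1

end prodLift

/-- With Bézout coefficients `λ a + μ b = 1`, the maps are the mutually inverse unimodular
changes of basis `(1, 0) ↦ (λ, -b)`, `(0, 1) ↦ (μ, a)` and `(1, 0) ↦ (a, b)`, `(0, 1) ↦ (-μ, λ)`. -/
def prodAddEquivOfCoprime {a b : ℕ} (h : a.Coprime b) (d : ℕ) :
    ZMod (a * d) × ZMod (b * d) ≃+ ZMod d × ZMod (a * b * d) :=
  have hbez (n : ℕ) : (a * Nat.gcdA a b + b * Nat.gcdB a b : ZMod n) = 1 := by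
    have := congrArg (Int.cast : ℤ → ZMod n) (Nat.gcd_eq_gcd_ab a b)
    rw [h.gcd_eq_one, Nat.cast_one, Int.cast_one, eq_comm] at this
    exact_mod_cast this
  AddMonoidHom.toAddEquiv
    (prodLift ((Nat.gcdA a b : ZMod d), ((-b : ℤ) : ZMod (a * b * d)))
      ((Nat.gcdB a b : ZMod d), ((a : ℤ) : ZMod (a * b * d)))
      ((zsmul_prod_intCast_eq_zero_iff _ _ _).2
        ⟨⟨a * Nat.gcdA a b, by push_cast; ring⟩, ⟨-1, by push_cast; ring⟩⟩)
      ((zsmul_prod_intCast_eq_zero_iff _ _ _).2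
        ⟨⟨b * Nat.gcdB a b, by push_cast; ring⟩, ⟨1, by push_cast; ring⟩⟩))
    (prodLift (((a : ℤ) : ZMod (a * d)), ((b : ℤ) : ZMod (b * d)))
      (((-Nat.gcdB a b : ℤ) : ZMod (a * d)), ((Nat.gcdA a b : ℤ) : ZMod (b * d)))
      ((zsmul_prod_intCast_eq_zero_iff _ _ _).2
        ⟨⟨1, by push_cast; ring⟩, ⟨1, by push_cast; ring⟩⟩)
      ((zsmul_prod_intCast_eq_zero_iff _ _ _).2
        ⟨⟨-(b * Nat.gcdB a b), by push_cast; ring⟩, ⟨a * Nat.gcdA a b, by push_cast; ring⟩⟩))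
    (prod_addMonoidHom_ext
      (by
        simp only [AddMonoidHom.comp_apply, prodLift_one_zero, prodLift_intCast]
        ext
        · simp [zsmul_eq_mul]; linear_combination hbez (a * d)
        · simp [zsmul_eq_mul]; ring)
      (by
        simp only [AddMonoidHom.comp_apply, prodLift_zero_one, prodLift_intCast]
        ext
        · simp [zsmul_eq_mul]; ring
        · simp [zsmul_eq_mul]; linear_combination hbez (b * d)))
    (prod_addMonoidHom_ext
      (by
        simp only [AddMonoidHom.comp_apply, prodLift_one_zero, prodLift_intCast]
        ext
        · simp [zsmul_eq_mul]; linear_combination hbez d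
        · simp [zsmul_eq_mul]; ring)
      (by
        simp only [AddMonoidHom.comp_apply, prodLift_zero_one, prodLift_intCast]
        ext
        · simp [zsmul_eq_mul]; ring
        · simp [zsmul_eq_mul]; linear_combination hbez (a * b * d)))

theorem nonempty_prod_addEquiv_gcd_lcm (m n : ℕ) :
    Nonempty (ZMod m × ZMod n ≃+ ZMod (m.gcd n) × ZMod (m.lcm n)) := by
  obtain ⟨m', n', hcop, hm, hn⟩ := Nat.exists_coprime m n
  generalize m.gcd n = d at hm hn ⊢
  subst hm hn
  rw [Nat.lcm_mul_right, hcop.lcm_eq_mul]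
  exact ⟨prodAddEquivOfCoprime hcop d⟩

end ZMod

theorem Nat.exists_gcd_eq_and_lcm_dvd (r t : ℕ) :
    ∃ α β b : ℤ, (r.gcd t : ℤ) = α * r + β * t ∧ (r.gcd t : ℤ) * b = β * t ∧
      (r.lcm t : ℤ) ∣ r * b ∧ (r.lcm t : ℤ) ∣ t * (1 - b) := by
  obtain ⟨r', t', hcop, hr, ht⟩ := Nat.exists_coprime r t
  obtain ⟨α, β, hαβ⟩ := Nat.isCoprime_iff_coprime.2 hcop
  have hL : r.lcm t = r' * t' * r.gcd t := by
    generalize r.gcd t = g at hr ht ⊢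
    subst hr ht
    rw [Nat.lcm_mul_right, hcop.lcm_eq_mul]
  generalize r.gcd t = g at hr ht hL ⊢
  generalize r.lcm t = L at hL ⊢
  subst hr ht hL
  push_cast
  refine ⟨α, β, β * t', ?_, by ring, ⟨β, by ring⟩, ⟨α, ?_⟩⟩
  · linear_combination (-(g : ℤ)) * hαβ
  · linear_combination (-(t' * g : ℤ)) * hαβ

abbrev TriangleGroup (r s t : ℕ) := PresentedGroup (triangleRels r s t)

namespace TriangleGroup

open Additive Multiplicative

variable {r s t : ℕ}

theorem of_zero_pow : (PresentedGroup.of 0 : TriangleGroup r s t) ^ r = 1 :=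
  PresentedGroup.one_of_mem (x := FreeGroup.of 0 ^ r) (by simp [triangleRels])

theorem of_one_pow : (PresentedGroup.of 1 : TriangleGroup r s t) ^ s = 1 :=
  PresentedGroup.one_of_mem (x := FreeGroup.of 1 ^ s) (by simp [triangleRels])

theorem of_two_pow : (PresentedGroup.of 2 : TriangleGroup r s t) ^ t = 1 :=
  PresentedGroup.one_of_mem (x := FreeGroup.of 2 ^ t) (by simp [triangleRels])

theorem of_mul_of_mul_of :
    (PresentedGroup.of 0 * PresentedGroup.of 1 * PresentedGroup.of 2 : TriangleGroup r s t) = 1 :=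
  PresentedGroup.one_of_mem (x := FreeGroup.of 0 * FreeGroup.of 1 * FreeGroup.of 2)
    (by simp [triangleRels])

variable (r s t) in
def genX : Additive (Abelianization (TriangleGroup r s t)) :=
  ofMul (Abelianization.of (PresentedGroup.of 0))

variable (r s t) in
def genY : Additive (Abelianization (TriangleGroup r s t)) :=
  ofMul (Abelianization.of (PresentedGroup.of 1))

theorem ofMul_of_two :
    ofMul (Abelianization.of (PresentedGroup.of 2 : TriangleGroup r s t)) =
      -(genX r s t + genY r s t) := by
  rw [eq_neg_iff_add_eq_zero, add_comm, genX, genY, ← ofMul_mul, ← ofMul_mul, ← map_mul,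
    ← map_mul, of_mul_of_mul_of, map_one, ofMul_one]

theorem zsmul_genX : (r : ℤ) • genX r s t = 0 := by
  rw [natCast_zsmul, genX, ← ofMul_pow, ← map_pow, of_zero_pow, map_one, ofMul_one]

theorem zsmul_genY : (s : ℤ) • genY r s t = 0 := by
  rw [natCast_zsmul, genY, ← ofMul_pow, ← map_pow, of_one_pow, map_one, ofMul_one]

theorem zsmul_genX_add_genY : (t : ℤ) • (genX r s t + genY r s t) = 0 := by
  rw [← neg_eq_zero, ← zsmul_neg, ← ofMul_of_two, natCast_zsmul, ← ofMul_pow, ← map_pow,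
    of_two_pow, map_one, ofMul_one]

theorem addMonoidHom_ext {B : Type*} [AddGroup B]
    {f f' : Additive (Abelianization (TriangleGroup r s t)) →+ B}
    (hX : f (genX r s t) = f' (genX r s t)) (hY : f (genY r s t) = f' (genY r s t)) :
    f = f' := by
  refine Additive.addMonoidHom_ext _ _ (Abelianization.hom_ext _ _ (PresentedGroup.ext ?_))
  intro i
  fin_cases i
  · exact hX
  · exact hY
  · change f (ofMul (Abelianization.of (PresentedGroup.of 2))) =
      f' (ofMul (Abelianization.of (PresentedGroup.of 2)))
    rw [ofMul_of_two, map_neg, map_neg, map_add, map_add, hX, hY]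

section lift

variable {B : Type*} [AddCommGroup B] {x y : B}

def lift (hx : (r : ℤ) • x = 0) (hy : (s : ℤ) • y = 0) (hxy : (t : ℤ) • (x + y) = 0) :
    Additive (Abelianization (TriangleGroup r s t)) →+ B :=
  MonoidHom.toAdditiveLeft <| Abelianization.lift <|
    PresentedGroup.toGroup (f := ![ofAdd x, ofAdd y, ofAdd (-(x + y))]) <| by
      rintro w (rfl | rfl | rfl | rfl) <;>
        simp only [map_mul, map_pow, FreeGroup.lift_apply_of, Matrix.cons_val, ← ofAdd_add,
          ← ofAdd_nsmul, ← natCast_zsmul, hx, hy, zsmul_neg, hxy, neg_zero, add_neg_cancel,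
          ofAdd_zero]

variable {hx : (r : ℤ) • x = 0} {hy : (s : ℤ) • y = 0} {hxy : (t : ℤ) • (x + y) = 0}

@[simp]
theorem lift_genX : lift hx hy hxy (genX r s t) = x := by
  simp [lift, genX]

@[simp]
theorem lift_genY : lift hx hy hxy (genY r s t) = y := by
  simp [lift, genY]

end lift

theorem lcm_zsmul_genY : (r.lcm t : ℤ) • genY r s t = 0 := by
  obtain ⟨u, hu⟩ : (r : ℤ) ∣ r.lcm t := Int.natCast_dvd_natCast.2 (Nat.dvd_lcm_left r t)
  obtain ⟨v, hv⟩ : (t : ℤ) ∣ r.lcm t := Int.natCast_dvd_natCast.2 (Nat.dvd_lcm_right r t)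
  calc (r.lcm t : ℤ) • genY r s t
      = v • ((t : ℤ) • (genX r s t + genY r s t)) - u • ((r : ℤ) • genX r s t) := by
        rw [smul_smul, smul_smul, mul_comm v, mul_comm u, ← hv, ← hu]; module
    _ = 0 := by rw [zsmul_genX, zsmul_genX_add_genY, smul_zero, smul_zero, sub_zero]

theorem gcd_lcm_zsmul_genY : (s.gcd (r.lcm t) : ℤ) • genY r s t = 0 := by
  rw [natCast_zsmul, ← addOrderOf_dvd_iff_nsmul_eq_zero]
  refine Nat.dvd_gcd ?_ ?_ <;> rw [addOrderOf_dvd_iff_nsmul_eq_zero, ← natCast_zsmul]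
  exacts [zsmul_genY, lcm_zsmul_genY]

theorem gcd_zsmul_genX_add_zsmul_genY {α β b : ℤ} (hg : (r.gcd t : ℤ) = α * r + β * t)
    (hgb : (r.gcd t : ℤ) * b = β * t) :
    (r.gcd t : ℤ) • (genX r s t + b • genY r s t) = 0 :=
  calc (r.gcd t : ℤ) • (genX r s t + b • genY r s t)
      = α • ((r : ℤ) • genX r s t) + β • ((t : ℤ) • (genX r s t + genY r s t)) := by
        rw [smul_add, smul_smul, hgb, hg]; module
    _ = 0 := by rw [zsmul_genX, zsmul_genX_add_genY, smul_zero, smul_zero, add_zero]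

theorem nonempty_addEquiv_zmod_prod (r s t : ℕ) :
    Nonempty (Additive (Abelianization (TriangleGroup r s t)) ≃+
      ZMod (r.gcd t) × ZMod (s.gcd (r.lcm t))) := by
  obtain ⟨α, β, b, hg, hgb, hrb, htb⟩ := Nat.exists_gcd_eq_and_lcm_dvd r t
  have hg_dvd (m : ℕ) (hm : r.gcd t ∣ m) (c : ℤ) : (r.gcd t : ℤ) ∣ m * c :=
    (Int.natCast_dvd_natCast.2 hm).mul_right c
  have hn_dvd {c : ℤ} (hc : (r.lcm t : ℤ) ∣ c) : (s.gcd (r.lcm t) : ℤ) ∣ c :=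
    (Int.natCast_dvd_natCast.2 (Nat.gcd_dvd_right _ _)).trans hc
  let φ := lift (r := r) (s := s) (t := t)
    (x := (((1 : ℤ) : ZMod (r.gcd t)), ((-b : ℤ) : ZMod (s.gcd (r.lcm t)))))
    (y := (((0 : ℤ) : ZMod (r.gcd t)), ((1 : ℤ) : ZMod (s.gcd (r.lcm t)))))
    ((ZMod.zsmul_prod_intCast_eq_zero_iff _ _ _).2
      ⟨hg_dvd r (Nat.gcd_dvd_left r t) _, by rw [mul_neg, dvd_neg]; exact hn_dvd hrb⟩)
    ((ZMod.zsmul_prod_intCast_eq_zero_iff _ _ _).2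
      ⟨by simp, by rw [mul_one]; exact Int.natCast_dvd_natCast.2 (Nat.gcd_dvd_left _ _)⟩)
    (by
      rw [Prod.mk_add_mk, ← Int.cast_add, ← Int.cast_add, ZMod.zsmul_prod_intCast_eq_zero_iff,
        neg_add_eq_sub]
      exact ⟨hg_dvd t (Nat.gcd_dvd_right r t) _, hn_dvd htb⟩)
  let ψ := ZMod.prodLift _ _ (gcd_zsmul_genX_add_zsmul_genY (s := s) hg hgb) gcd_lcm_zsmul_genY
  refine ⟨AddMonoidHom.toAddEquiv φ ψ (addMonoidHom_ext ?_ ?_) (ZMod.prod_addMonoidHom_ext ?_ ?_)⟩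
  · simp only [AddMonoidHom.comp_apply, AddMonoidHom.id_apply, φ, ψ, lift_genX,
      ZMod.prodLift_intCast]
    module
  · simp only [AddMonoidHom.comp_apply, AddMonoidHom.id_apply, φ, ψ, lift_genY,
      ZMod.prodLift_intCast]
    module
  · simp only [AddMonoidHom.comp_apply, AddMonoidHom.id_apply, φ, ψ, ZMod.prodLift_one_zero,
      map_add, map_zsmul, lift_genX, lift_genY]
    ext <;> simp
  · simp [φ, ψ]

end TriangleGroup

theorem triangle_group_abelianization_general (r s t : ℕ) :
    Nonempty (Abelianization (PresentedGroup (triangleRels r s t)) ≃*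
      Multiplicative (ZMod (Nat.gcd (Nat.gcd r s) t) ×
        ZMod (Nat.lcm (Nat.lcm (Nat.gcd r s) (Nat.gcd r t)) (Nat.gcd s t)))) := by
  have hgcd : (r.gcd s).gcd t = (r.gcd t).gcd (s.gcd (r.lcm t)) := by
    rw [← Nat.gcd_assoc, Nat.gcd_right_comm, Nat.gcd_eq_left
      ((Nat.gcd_dvd_left _ _).trans ((Nat.gcd_dvd_left r t).trans (Nat.dvd_lcm_left r t)))]
  have hlcm : ((r.gcd s).lcm (r.gcd t)).lcm (s.gcd t) = (r.gcd t).lcm (s.gcd (r.lcm t)) := by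
    rw [Nat.gcd_lcm_distrib_left, Nat.gcd_comm s r]
    ac_rfl
  obtain ⟨e₁⟩ := TriangleGroup.nonempty_addEquiv_zmod_prod r s t
  obtain ⟨e₂⟩ := ZMod.nonempty_prod_addEquiv_gcd_lcm (r.gcd t) (s.gcd (r.lcm t))
  rw [hgcd, hlcm]
  exact ⟨AddEquiv.toMultiplicativeRight (e₁.trans e₂)⟩

theorem triangle_group_abelianization (r s t : ℕ)
    (hr : 0 < r) (hs : 0 < s) (ht : 0 < t) :
    Nonempty (Abelianization (PresentedGroup (triangleRels r s t)) ≃*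
      Multiplicative (ZMod (Nat.gcd (Nat.gcd r s) t) ×
        ZMod (Nat.lcm (Nat.lcm (Nat.gcd r s) (Nat.gcd r t)) (Nat.gcd s t)))) :=
  triangle_group_abelianization_general r s t
end
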